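/- arXiv:math/9807128 — 2 statements merged into one kernel-verified Lean document; each statement's English description precedes it below -/
import Mathlib

section
/- The operators I and C satisfy the IC-equation I∘(I−C)∘C = (I−C)∘C∘I. That is, for every finite real sequence h = (h_0, …, h_n), one has I(I(Ch)) − I(C(Ch)) = I(C(Ih)) − C(C(Ih)), where differences of sequences of equal length are taken entrywise; both sides are sequences of length n+4. -/
/-- The operator `I`: convolution with `(1,1)`, sending a sequence of length
`n+1` to one of length `n+2`, with `(Ih)_k = h_k + h_{k-1}` (out-of-range
terms are zero). -/
def Iop {n : ℕ} (h : Fin (n + 1) → ℝ) : Fin (n + 2) → ℝ := fun k =>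
  (if hk : (k : ℕ) < n + 1 then h ⟨(k : ℕ), hk⟩ else 0) +
  (if hk : 1 ≤ (k : ℕ) then h ⟨(k : ℕ) - 1, by omega⟩ else 0)

/-- The operator `C`: repeating the middle term, sending a sequence of length
`n+1` to one of length `n+2`, with `(Ch)_k = h_k` for `k ≤ ⌈n/2⌉` and
`(Ch)_k = h_{k-1}` otherwise. -/
def Cop {n : ℕ} (h : Fin (n + 1) → ℝ) : Fin (n + 2) → ℝ := fun k =>
  if hk : (k : ℕ) ≤ (n + 1) / 2 then h ⟨(k : ℕ), by omega⟩
  else h ⟨(k : ℕ) - 1, by omega⟩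

/-- A finite sequence `(h_0, …, h_n)` is palindromic if `h_k = h_{n-k}`. -/
def Palindromic {n : ℕ} (h : Fin (n + 1) → ℝ) : Prop :=
  ∀ k : Fin (n + 1), h k = h ⟨n - (k : ℕ), by omega⟩

/-- A finite sequence `(h_0, …, h_n)` is unimodal if it is weakly increasing
up to index `⌊n/2⌋` and weakly decreasing from index `⌊n/2⌋` on. -/
def Unimodal {n : ℕ} (h : Fin (n + 1) → ℝ) : Prop :=
  (∀ j k : Fin (n + 1), (j : ℕ) ≤ (k : ℕ) → (k : ℕ) ≤ n / 2 → h j ≤ h k) ∧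
  (∀ j k : Fin (n + 1), n / 2 ≤ (j : ℕ) → (j : ℕ) ≤ (k : ℕ) → h k ≤ h j)


/-- Extend a finite sequence to `ℤ` by zero. -/
def ext {m : ℕ} (g : Fin (m + 1) → ℝ) : ℤ → ℝ := fun i =>
  if hi : 0 ≤ i ∧ i < m + 1 then g ⟨i.toNat, by omega⟩ else 0

lemma ext_apply {m : ℕ} (g : Fin (m + 1) → ℝ) (k : Fin (m + 1)) :
    ext g (k : ℤ) = g k := by
  have hk := k.isLt
  rw [ext]
  rw [dif_pos ⟨by positivity, by exact_mod_cast hk⟩]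
  exact congrArg g (Fin.ext (by simp))

lemma ext_I {m : ℕ} (g : Fin (m + 1) → ℝ) (i : ℤ) :
    ext (Iop g) i = ext g i + ext g (i - 1) := by
  simp only [ext, Iop]
  split_ifs <;> first | omega | simp_all

lemma ext_C {m : ℕ} (g : Fin (m + 1) → ℝ) (i : ℤ) :
    ext (Cop g) i =
      if i ≤ (((m + 1) / 2 : ℕ) : ℤ) then ext g i else ext g (i - 1) := by
  simp only [ext, Cop]
  split_ifs <;> first | omega | simp_all

/-- The IC-equation: `I (I - C) C = (I - C) C I`, i.e. for every finite real
sequence `h` of length `n+1`,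
`I(I(Ch)) - I(C(Ch)) = I(C(Ih)) - C(C(Ih))` entrywise (both sides are
sequences of length `n+4`). -/
theorem ic_equation {n : ℕ} (h : Fin (n + 1) → ℝ) (k : Fin (n + 4)) :
    Iop (Iop (Cop h)) k - Iop (Cop (Cop h)) k
      = Iop (Cop (Iop h)) k - Cop (Cop (Iop h)) k := by
  have e1 : Iop (Iop (Cop h)) k = ext (Iop (Iop (Cop h))) (k : ℤ) :=
    (ext_apply _ k).symm
  have e2 : Iop (Cop (Cop h)) k = ext (Iop (Cop (Cop h))) (k : ℤ) :=
    (ext_apply _ k).symm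
  have e3 : Iop (Cop (Iop h)) k = ext (Iop (Cop (Iop h))) (k : ℤ) :=
    (ext_apply _ k).symm
  have e4 : Cop (Cop (Iop h)) k = ext (Cop (Cop (Iop h))) (k : ℤ) :=
    (ext_apply _ k).symm
  rw [e1, e2, e3, e4]
  simp only [ext_I, ext_C]
  split_ifs <;> first | omega | ring
end

section
/- For every word W of length n in the two operators I and C, the sequence obtained by applying the operators of W in succession to the one-term sequence (1) is a sequence (h_0, …, h_n) of length n+1 of positive integers that is palindromic, unimodal, and satisfies h_0 = h_n = 1. (This is the h-vector of the n-dimensional IC variety determined by W, and the conclusions express Poincaré duality and the unimodality consequence of the strong Lefschetz theorem for middle-perversity intersection homology of these toric varieties.) -/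
/-- Applying a word in the operators `I` (entry `true`) and `C` (entry `false`)
to the one-term sequence `(1)`.  The result has length `W.length + 1`. -/
def applyWord : (W : List Bool) → (Fin (W.length + 1) → ℝ)
  | [] => fun _ => 1
  | b :: W => if b then Iop (applyWord W) else Cop (applyWord W)

variable {n : ℕ} {h : Fin (n + 1) → ℝ}

section Evaluation

variable (h)

theorem Iop_apply_zero : Iop h ⟨0, by omega⟩ = h ⟨0, by omega⟩ := by
  simp [Iop]

theorem Iop_apply_succ {k : ℕ} (hk : k < n) :
    Iop h ⟨k + 1, by omega⟩ = h ⟨k + 1, by omega⟩ + h ⟨k, by omega⟩ := by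
  simp [Iop, hk]

theorem Iop_apply_last : Iop h ⟨n + 1, by omega⟩ = h ⟨n, by omega⟩ := by
  simp [Iop]

theorem Cop_apply_of_le {k : ℕ} (hk : k ≤ (n + 1) / 2) :
    Cop h ⟨k, by omega⟩ = h ⟨k, by omega⟩ :=
  dif_pos hk

theorem Cop_apply_succ_of_le {k : ℕ} (hk : (n + 1) / 2 ≤ k) (hkn : k < n + 1) :
    Cop h ⟨k + 1, by omega⟩ = h ⟨k, hkn⟩ := by
  simp [Cop, show ¬ k + 1 ≤ (n + 1) / 2 by omega]

end Evaluation

theorem Iop_induction {P : ℝ → Prop} (hadd : ∀ x y, P x → P y → P (x + y))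
    (hh : ∀ k, P (h k)) (k : Fin (n + 2)) : P (Iop h k) := by
  obtain ⟨_ | k, hk⟩ := k
  · simpa only [Iop_apply_zero] using hh _
  · rcases Nat.lt_or_ge k n with hkn | hkn
    · simpa only [Iop_apply_succ h hkn] using hadd _ _ (hh _) (hh _)
    · obtain rfl : k = n := by omega
      simpa only [Iop_apply_last] using hh _

theorem Cop_induction {P : ℝ → Prop} (hh : ∀ k, P (h k)) (k : Fin (n + 2)) : P (Cop h k) := by
  unfold Cop
  split_ifs <;> exact hh _

theorem palindromic_iff_add_eq : Palindromic h ↔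
    ∀ a b (ha : a < n + 1) (hb : b < n + 1), a + b = n → h ⟨a, ha⟩ = h ⟨b, hb⟩ := by
  refine ⟨fun hp a b ha hb hab => ?_, fun hp k => hp _ _ _ _ (by omega)⟩
  rw [hp ⟨a, ha⟩]
  obtain rfl : b = n - a := by omega
  rfl

theorem palindromic_Iop (hp : Palindromic h) : Palindromic (Iop h) := by
  rw [palindromic_iff_add_eq] at hp ⊢
  rintro (_ | a) (_ | b) ha hb hab
  · omega
  · obtain rfl : b = n := by omega
    rw [Iop_apply_zero, Iop_apply_last]
    exact hp _ _ _ _ (by omega)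
  · obtain rfl : a = n := by omega
    rw [Iop_apply_zero, Iop_apply_last]
    exact hp _ _ _ _ (by omega)
  · rw [Iop_apply_succ h (by omega), Iop_apply_succ h (by omega),
      hp (a + 1) b _ _ (by omega), hp a (b + 1) _ _ (by omega), add_comm]

theorem palindromic_Cop (hp : Palindromic h) : Palindromic (Cop h) := by
  rw [palindromic_iff_add_eq] at hp ⊢
  intro a b ha hb hab
  simp only [Cop]
  split_ifs
  · obtain rfl : a = b := by omega
    rfl
  all_goals first | omega | exact hp _ _ _ _ (by omega)

/-- Monotone up to `⌈n/2⌉`, rather than the `⌊n/2⌋` of `Unimodal`: this form is preserved by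
`C` without appeal to palindromy. -/
def MonotoneToMiddle (h : Fin (n + 1) → ℝ) : Prop :=
  ∀ k (hk : k + 1 ≤ (n + 1) / 2), h ⟨k, by omega⟩ ≤ h ⟨k + 1, by omega⟩

theorem MonotoneToMiddle.le (hm : MonotoneToMiddle h) {a b : ℕ} (hab : a ≤ b)
    (hb : b ≤ (n + 1) / 2) : h ⟨a, by omega⟩ ≤ h ⟨b, by omega⟩ := by
  induction b, hab using Nat.le_induction with
  | base => rfl
  | succ b hab ih => exact (ih (by omega)).trans (hm b hb)

theorem Palindromic.unimodal (hp : Palindromic h) (hm : MonotoneToMiddle h) : Unimodal h := by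
  refine ⟨fun j k hjk hk => hm.le hjk (by omega), fun j k hj hjk => ?_⟩
  rw [hp j, hp k]
  exact hm.le (by omega) (by omega)

theorem monotoneToMiddle_Cop (hm : MonotoneToMiddle h) : MonotoneToMiddle (Cop h) := by
  intro k hk
  rw [Cop_apply_of_le h (by omega : k ≤ (n + 1) / 2)]
  by_cases hk' : k + 1 ≤ (n + 1) / 2
  · rw [Cop_apply_of_le h hk']
    exact hm k hk'
  · rw [Cop_apply_succ_of_le h (by omega) (by omega)]

theorem monotoneToMiddle_Iop (hp : Palindromic h) (hm : MonotoneToMiddle h)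
    (hnonneg : ∀ k, 0 ≤ h k) : MonotoneToMiddle (Iop h) := by
  rintro (_ | k) hk
  · rw [Iop_apply_zero]
    rcases Nat.eq_zero_or_pos n with rfl | hn
    · rw [Iop_apply_last]
    · rw [Iop_apply_succ h hn]
      linarith [hnonneg ⟨0 + 1, by omega⟩]
  · rw [Iop_apply_succ h (by omega), Iop_apply_succ h (by omega)]
    have hstep : h ⟨k, by omega⟩ ≤ h ⟨k + 1 + 1, by omega⟩ := by
      by_cases hk' : k + 2 ≤ (n + 1) / 2
      · exact hm.le (by omega) hk'
      · exact ((palindromic_iff_add_eq.mp hp) _ _ _ _ (by omega)).le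
    linarith

theorem applyWord_induction {P : ℝ → Prop} (hadd : ∀ x y, P x → P y → P (x + y)) (h1 : P 1)
    (W : List Bool) (k : Fin (W.length + 1)) : P (applyWord W k) := by
  induction W with
  | nil => exact h1
  | cons b W ih => cases b; exacts [Cop_induction ih k, Iop_induction hadd ih k]

theorem applyWord_zero (W : List Bool) : applyWord W ⟨0, by omega⟩ = 1 := by
  induction W with
  | nil => rfl
  | cons b W ih =>
    cases b
    exacts [(Cop_apply_of_le _ (Nat.zero_le _)).trans ih, (Iop_apply_zero _).trans ih]

theorem applyWord_length (W : List Bool) : applyWord W ⟨W.length, by omega⟩ = 1 := by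
  induction W with
  | nil => rfl
  | cons b W ih =>
    cases b
    exacts [(Cop_apply_succ_of_le _ (by omega) (by omega)).trans ih, (Iop_apply_last _).trans ih]

theorem palindromic_applyWord (W : List Bool) : Palindromic (applyWord W) := by
  induction W with
  | nil => exact fun _ => rfl
  | cons b W ih => cases b; exacts [palindromic_Cop ih, palindromic_Iop ih]

theorem monotoneToMiddle_applyWord (W : List Bool) : MonotoneToMiddle (applyWord W) := by
  induction W with
  | nil => exact fun k hk => absurd hk (by simp)
  | cons b W ih =>
    have hnonneg : ∀ k, 0 ≤ applyWord W k :=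
      applyWord_induction (fun _ _ => add_nonneg) zero_le_one W
    cases b
    exacts [monotoneToMiddle_Cop ih, monotoneToMiddle_Iop (palindromic_applyWord W) ih hnonneg]

/-- For every word `W` of length `n` in the operators `I` and `C`, applying the
operators of `W` in succession to the sequence `(1)` yields a sequence
`(h_0, …, h_n)` of positive integers that is palindromic, unimodal, and has
`h_0 = h_n = 1`:  the h-vector of the `n`-dimensional `IC` variety determined
by `W`. -/
theorem applyWord_h_vector (W : List Bool) :
    (∀ k : Fin (W.length + 1), ∃ m : ℕ, 0 < m ∧ applyWord W k = (m : ℝ)) ∧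
    Palindromic (applyWord W) ∧ Unimodal (applyWord W) ∧
    applyWord W ⟨0, Nat.succ_pos _⟩ = 1 ∧
    applyWord W ⟨W.length, Nat.lt_succ_self _⟩ = 1 := by
  have hposNat : ∀ k, ∃ m : ℕ, 0 < m ∧ applyWord W k = m :=
    applyWord_induction (P := fun x => ∃ m : ℕ, 0 < m ∧ x = m)
      (fun _ _ ⟨m, hm, hx⟩ ⟨m', _, hy⟩ => ⟨m + m', by omega, by rw [hx, hy, Nat.cast_add]⟩)
      ⟨1, one_pos, Nat.cast_one.symm⟩ W
  exact ⟨hposNat, palindromic_applyWord W,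
    (palindromic_applyWord W).unimodal (monotoneToMiddle_applyWord W),
    applyWord_zero W, applyWord_length W⟩
end
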